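/- Let α ∈ (0,1) and z ∈ ℂ with Re(z) ≤ 0. Suppose U : ℕ → ℂ satisfies the backward Euler recursion (1 − z) U^{n+1} = Σ_{k=0}^{n} c^{n+1}_k U^k for all n ∈ ℕ. Then |U^n| ≤ |U^0| for all n ∈ ℕ. -/

import Mathlib

/-- The L1 coefficients `c^{n+1}_k` for the discrete Caputo derivative:
`c^{n+1}_0 = (n+1)^{1-α} - n^{1-α}` and, for `1 ≤ k ≤ n`,
`c^{n+1}_k = 2(n+1-k)^{1-α} - (n+2-k)^{1-α} - (n-k)^{1-α}`. -/
noncomputable def caputoCoeff (α : ℝ) (n k : ℕ) : ℝ :=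
  if k = 0 then ((n : ℝ) + 1) ^ (1 - α) - (n : ℝ) ^ (1 - α)
  else 2 * ((n : ℝ) + 1 - (k : ℝ)) ^ (1 - α) - ((n : ℝ) + 2 - (k : ℝ)) ^ (1 - α)
    - ((n : ℝ) - (k : ℝ)) ^ (1 - α)

/-!
The coefficients `c^{n+1}_k` are nonnegative (by concavity of `x ↦ x^{1-α}`) and sum to one
(the sum telescopes to `1^{1-α} - 0^{1-α}`), so the right-hand side of the recursion is a convex
combination of the earlier values. Since `Re z ≤ 0` gives `|1 - z| ≥ 1`, strong induction shows
that no `|U^n|` can exceed `|U^0|`.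
-/

section ConvexCombination

variable {𝕜 : Type*} [RCLike 𝕜]

theorem norm_sum_ofReal_mul_le {ι : Type*} (s : Finset ι) {c : ι → ℝ} {x : ι → 𝕜} {M : ℝ}
    (hc : ∀ i ∈ s, 0 ≤ c i) (hsum : ∑ i ∈ s, c i ≤ 1) (hx : ∀ i ∈ s, ‖x i‖ ≤ M)
    (hM : 0 ≤ M) :
    ‖∑ i ∈ s, (c i : 𝕜) * x i‖ ≤ M :=
  calc ‖∑ i ∈ s, (c i : 𝕜) * x i‖
      ≤ ∑ i ∈ s, ‖(c i : 𝕜) * x i‖ := norm_sum_le _ _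
    _ ≤ ∑ i ∈ s, c i * M := Finset.sum_le_sum fun i hi => by
        rw [norm_mul, RCLike.norm_ofReal, abs_of_nonneg (hc i hi)]
        exact mul_le_mul_of_nonneg_left (hx i hi) (hc i hi)
    _ = (∑ i ∈ s, c i) * M := (Finset.sum_mul _ _ _).symm
    _ ≤ M := mul_le_of_le_one_left hM hsum

theorem norm_le_norm_zero_of_mul_eq_sum {c : ℕ → ℕ → ℝ}
    (hc : ∀ n k, k ≤ n → 0 ≤ c n k) (hsum : ∀ n, ∑ k ∈ Finset.range (n + 1), c n k ≤ 1)
    {w : 𝕜} (hw : 1 ≤ ‖w‖) {U : ℕ → 𝕜}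
    (hrec : ∀ n, w * U (n + 1) = ∑ k ∈ Finset.range (n + 1), (c n k : 𝕜) * U k) :
    ∀ n, ‖U n‖ ≤ ‖U 0‖ := by
  intro n
  induction n using Nat.strong_induction_on with
  | _ n ih =>
    match n with
    | 0 => exact le_rfl
    | m + 1 =>
      have hsum_le : ‖∑ k ∈ Finset.range (m + 1), (c m k : 𝕜) * U k‖ ≤ ‖U 0‖ :=
        norm_sum_ofReal_mul_le _
          (fun k hk => hc m k (Nat.lt_succ_iff.mp (Finset.mem_range.mp hk))) (hsum m)
          (fun k hk => ih k (Finset.mem_range.mp hk)) (norm_nonneg _)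
      calc ‖U (m + 1)‖ ≤ ‖w‖ * ‖U (m + 1)‖ := le_mul_of_one_le_left (norm_nonneg _) hw
        _ = ‖∑ k ∈ Finset.range (m + 1), (c m k : 𝕜) * U k‖ := by rw [← norm_mul, hrec]
        _ ≤ ‖U 0‖ := hsum_le

end ConvexCombination

theorem Complex.one_le_norm_one_sub {z : ℂ} (hz : z.re ≤ 0) : 1 ≤ ‖1 - z‖ :=
  calc (1 : ℝ) ≤ (1 - z).re := by simp only [Complex.sub_re, Complex.one_re]; linarith
    _ ≤ ‖1 - z‖ := Complex.re_le_norm _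

theorem Real.rpow_add_one_add_rpow_sub_one_le {s a : ℝ} (hs0 : 0 ≤ s) (hs1 : s ≤ 1)
    (ha : 1 ≤ a) : (a + 1) ^ s + (a - 1) ^ s ≤ 2 * a ^ s := by
  have hmid := (Real.concaveOn_rpow hs0 hs1).2
    (show a - 1 ∈ Set.Ici (0 : ℝ) from Set.mem_Ici.mpr (by linarith))
    (show a + 1 ∈ Set.Ici (0 : ℝ) from Set.mem_Ici.mpr (by linarith))
    (show (0 : ℝ) ≤ 1 / 2 by norm_num) (show (0 : ℝ) ≤ 1 / 2 by norm_num) (by norm_num)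
  rw [smul_eq_mul, smul_eq_mul, smul_eq_mul, smul_eq_mul,
    show (1 / 2 : ℝ) * (a - 1) + 1 / 2 * (a + 1) = a by ring] at hmid
  linarith

theorem caputoCoeff_nonneg {α : ℝ} (hα0 : 0 ≤ α) (hα1 : α ≤ 1) {n k : ℕ} (hk : k ≤ n) :
    0 ≤ caputoCoeff α n k := by
  unfold caputoCoeff
  split_ifs with hk0
  · have := Real.rpow_le_rpow (Nat.cast_nonneg n) (le_add_of_nonneg_right zero_le_one)
      (sub_nonneg.mpr hα1)
    linarith
  · have hk1 : (1 : ℝ) ≤ k := by exact_mod_cast Nat.one_le_iff_ne_zero.mpr hk0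
    have hkn : (k : ℝ) ≤ n := by exact_mod_cast hk
    have := Real.rpow_add_one_add_rpow_sub_one_le (s := 1 - α) (a := (n : ℝ) + 1 - k)
      (by linarith) (by linarith) (by linarith)
    rw [show (n : ℝ) + 1 - k + 1 = n + 2 - k by ring,
      show (n : ℝ) + 1 - k - 1 = n - k by ring] at this
    linarith

theorem caputoCoeff_succ (α : ℝ) (n i : ℕ) :
    caputoCoeff α n (i + 1) =
      ((n - i : ℝ) ^ (1 - α) - (n + 1 - i : ℝ) ^ (1 - α))
        - ((n - (i + 1 : ℕ) : ℝ) ^ (1 - α) - (n + 1 - (i + 1 : ℕ) : ℝ) ^ (1 - α)) := by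
  simp only [caputoCoeff, Nat.succ_ne_zero, if_false, Nat.cast_add, Nat.cast_one]
  ring_nf

theorem sum_caputoCoeff {α : ℝ} (hα : α ≠ 1) (n : ℕ) :
    ∑ k ∈ Finset.range (n + 1), caputoCoeff α n k = 1 := by
  rw [Finset.sum_range_succ', Finset.sum_congr rfl fun i _ => caputoCoeff_succ α n i,
    Finset.sum_range_sub' (fun i : ℕ => (n - i : ℝ) ^ (1 - α) - (n + 1 - i : ℝ) ^ (1 - α))]
  simp only [caputoCoeff, if_true, Nat.cast_zero, sub_zero, sub_self, add_sub_cancel_left,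
    Real.one_rpow, Real.zero_rpow (sub_ne_zero.mpr hα.symm)]
  ring

/-- if `Re z ≤ 0` and `U : ℕ → ℂ` satisfies the backward Euler recursion
`(1 - z) U^{n+1} = Σ_{k=0}^n c^{n+1}_k U^k` for all `n`, then `|U^n| ≤ |U^0|`. -/
theorem backward_euler_stable (α : ℝ) (hα : α ∈ Set.Ioo (0 : ℝ) 1)
    (z : ℂ) (hre : z.re ≤ 0) (U : ℕ → ℂ)
    (hrec : ∀ n : ℕ, (1 - z) * U (n + 1)
      = ∑ k ∈ Finset.range (n + 1), (caputoCoeff α n k : ℂ) * U k) :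
    ∀ n : ℕ, ‖U n‖ ≤ ‖U 0‖ :=
  norm_le_norm_zero_of_mul_eq_sum (fun _ _ hk => caputoCoeff_nonneg hα.1.le hα.2.le hk)
    (fun n => (sum_caputoCoeff hα.2.ne n).le) (Complex.one_le_norm_one_sub hre) hrec
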